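/- arXiv:1409.3649 — 3 statements merged into one kernel-verified Lean document; each statement's English description precedes it below -/
import Mathlib

section
/- Let (X, 𝓕, m) be a probability space, T an m-nonsingular transformation, and suppose the Perron–Frobenius operator 𝓛_T is asymptotically periodic with data s, r(k), g_{k,j}, λ_{k,j} (1 ≤ k ≤ s, 1 ≤ j ≤ r(k)); set g_k = (1/r(k)) Σ_{j=1}^{r(k)} g_{k,j}. Suppose further that ĝ_{i,j} ∈ L¹(m) (1 ≤ i ≤ ŝ, 1 ≤ j ≤ r̂(i)) are probability density functions with ĝ_{i,j}·ĝ_{k,l} = 0 m-a.e. for (i,j) ≠ (k,l), satisfying the support-cycling condition: m({ĝ_{i,j} > 0} \ T⁻¹{ĝ_{i,j+1} > 0}) = 0 for 1 ≤ j ≤ r̂(i)−1 and m({ĝ_{i,r̂(i)} > 0} \ T⁻¹{ĝ_{i,1} > 0}) = 0; set ĝ_i = (1/r̂(i)) Σ_{j=1}^{r̂(i)} ĝ_{i,j}. Then for every i ∈ {1,…,ŝ}: (a) m({ĝ_i > 0} ∩ ⋃_{k=1}^{s} {g_k > 0}) > 0; (b) for every k ∈ {1,…,s}, either m({g_k > 0}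 \ {ĝ_i > 0}) = 0 or m({ĝ_i > 0} ∩ {g_k > 0}) = 0; and consequently (c) ŝ ≤ s. -/
open MeasureTheory Filter Topology

noncomputable section

/-- `L` is the Perron–Frobenius operator of the `μ`-nonsingular transformation `T`:
for every integrable `f`, `L f` is integrable and `∫_A L f dμ = ∫_{T⁻¹ A} f dμ`
for every measurable set `A`. -/
def IsPF {α : Type*} [MeasurableSpace α] (μ : Measure α) (T : α → α)
    (L : (α → ℝ) → α → ℝ) : Prop :=
  ∀ f : α → ℝ, Integrable f μ →
    Integrable (L f) μ ∧
      ∀ A : Set α, MeasurableSet A → ∫ x in A, L f x ∂μ = ∫ x in T ⁻¹' A, f x ∂μ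

/-- Asymptotic periodicity of an operator `L` on `L¹(μ)` with data `s`, `r i`,
probability densities `g i j` and bounded linear functionals `Λ i j`. -/
def AsympPeriodic {α : Type*} [MeasurableSpace α] (μ : Measure α)
    (L : (α → ℝ) → α → ℝ) (s : ℕ) (r : ℕ → ℕ) (g : ℕ → ℕ → α → ℝ)
    (Λ : ℕ → ℕ → (α →₁[μ] ℝ) →L[ℝ] ℝ) : Prop :=
  1 ≤ s ∧ (∀ i ∈ Finset.Icc 1 s, 1 ≤ r i) ∧
    (∀ i ∈ Finset.Icc 1 s, ∀ j ∈ Finset.Icc 1 (r i),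
      Measurable (g i j) ∧ Integrable (g i j) μ ∧ 0 ≤ᵐ[μ] g i j ∧ ∫ x, g i j x ∂μ = 1) ∧
    (∀ i ∈ Finset.Icc 1 s, ∀ j ∈ Finset.Icc 1 (r i), ∀ k ∈ Finset.Icc 1 s,
      ∀ l ∈ Finset.Icc 1 (r k), (i, j) ≠ (k, l) →
        (fun x => g i j x * g k l x) =ᵐ[μ] 0) ∧
    (∀ i ∈ Finset.Icc 1 s,
      (∀ j ∈ Finset.Icc 1 (r i - 1), L (g i j) =ᵐ[μ] g i (j + 1)) ∧
        L (g i (r i)) =ᵐ[μ] g i 1) ∧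
    ∀ (f : α → ℝ) (hf : Integrable f μ),
      Tendsto (fun n => ∫ x, |(L^[n] (fun x => f x -
          ∑ i ∈ Finset.Icc 1 s, ∑ j ∈ Finset.Icc 1 (r i), Λ i j (hf.toL1 f) * g i j x)) x| ∂μ)
        atTop (𝓝 0)

/-- The averaged density `(1/r) ∑_{j=1}^{r} g j`. -/
def avgDens {α : Type*} (r : ℕ) (g : ℕ → α → ℝ) : α → ℝ :=
  fun x => (r : ℝ)⁻¹ * ∑ j ∈ Finset.Icc 1 r, g j x

/-!
The support `{ĝ_i > 0}` of an averaged density is forward-invariant under `T`. Test the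
asymptotic periodicity on the indicator `f` of a forward-invariant set `B` of positive measure:
the limit cycle `H = ∑ λ_{k,j}(f) g_{k,j}` has the same integral as `f`, and since `𝓛^n f` stays
supported in `B` while `𝓛^n H` returns to `H` along the multiples of `∏ r(k)`, `H` vanishes
off `B` too. By orthogonality some `g_{k,j}` with `λ_{k,j}(f) ≠ 0` is then supported in `B`, and
transporting it around its cycle by `𝓛` puts all of `{g_k > 0}` inside `B`.
For `B = {ĝ_i > 0}` this gives (a); for `B = {ĝ_i > 0} ∩ {g_k > 0}` it gives (b), because the
supports of distinct `g_k` are disjoint; and since the supports of distinct `ĝ_i` are disjoint,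
the resulting `i ↦ k` is injective, which gives (c).
-/
namespace IsPF

variable {X : Type*} [MeasurableSpace X] {m : Measure X} {T : X → X} {L : (X → ℝ) → X → ℝ}
  {f h : X → ℝ}

lemma integrable (hL : IsPF m T L) (hf : Integrable f m) : Integrable (L f) m :=
  (hL f hf).1

lemma setIntegral_eq (hL : IsPF m T L) (hf : Integrable f m) {A : Set X} (hA : MeasurableSet A) :
    ∫ x in A, L f x ∂m = ∫ x in T ⁻¹' A, f x ∂m :=
  (hL f hf).2 A hA

lemma integral_eq (hL : IsPF m T L) (hf : Integrable f m) : ∫ x, L f x ∂m = ∫ x, f x ∂m := by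
  simpa using hL.setIntegral_eq hf MeasurableSet.univ

lemma ae_eq_of_setIntegral_eq (hL : IsPF m T L) (hf : Integrable f m) {u : X → ℝ}
    (hu : Integrable u m) (h : ∀ A, MeasurableSet A → ∫ x in A, u x ∂m = ∫ x in T ⁻¹' A, f x ∂m) :
    L f =ᵐ[m] u :=
  (hL.integrable hf).ae_eq_of_forall_setIntegral_eq _ _ hu fun A hA _ => by
    rw [hL.setIntegral_eq hf hA, h A hA]

lemma congr_ae (hL : IsPF m T L) (hf : Integrable f m) (hfh : f =ᵐ[m] h) : L f =ᵐ[m] L h :=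
  hL.ae_eq_of_setIntegral_eq hf (hL.integrable (hf.congr hfh)) fun A hA => by
    rw [hL.setIntegral_eq (hf.congr hfh) hA]
    exact integral_congr_ae (ae_restrict_of_ae hfh.symm)

lemma sub_ae_eq (hL : IsPF m T L) (hf : Integrable f m) (hh : Integrable h m) :
    L (fun x => f x - h x) =ᵐ[m] fun x => L f x - L h x :=
  hL.ae_eq_of_setIntegral_eq (hf.sub hh) ((hL.integrable hf).sub (hL.integrable hh)) fun A hA => by
    rw [integral_sub (hL.integrable hf).integrableOn (hL.integrable hh).integrableOn,
      hL.setIntegral_eq hf hA, hL.setIntegral_eq hh hA,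
      ← integral_sub hf.integrableOn hh.integrableOn]
    rfl

lemma sum_mul_ae_eq_of_ae_eq (hL : IsPF m T L) {ι : Type*} {t : Finset ι} (c : ι → ℝ)
    {F : ι → X → ℝ} (hF : ∀ b ∈ t, Integrable (F b) m) (hfix : ∀ b ∈ t, L (F b) =ᵐ[m] F b) :
    L (fun x => ∑ b ∈ t, c b * F b x) =ᵐ[m] fun x => ∑ b ∈ t, c b * F b x := by
  have hcF : ∀ b ∈ t, Integrable (fun x => c b * F b x) m := fun b hb => (hF b hb).const_mul _
  refine hL.ae_eq_of_setIntegral_eq (integrable_finsetSum t hcF) (integrable_finsetSum t hcF)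
    fun A hA => ?_
  rw [integral_finsetSum t fun b hb => (hcF b hb).integrableOn,
    integral_finsetSum t fun b hb => (hcF b hb).integrableOn]
  refine Finset.sum_congr rfl fun b hb => ?_
  rw [integral_const_mul, integral_const_mul, ← hL.setIntegral_eq (hF b hb) hA,
    setIntegral_congr_ae hA ((hfix b hb).mono fun x hx _ => hx.symm)]

lemma iterate (hL : IsPF m T L) (hT : Measurable T) (n : ℕ) : IsPF m T^[n] L^[n] := by
  induction n with
  | zero => exact fun f hf => ⟨hf, fun A _ => rfl⟩
  | succ n ih =>
    intro f hf
    rw [Function.iterate_succ', Function.iterate_succ']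
    refine ⟨hL.integrable (ih f hf).1, fun A hA => ?_⟩
    rw [Function.comp_apply, hL.setIntegral_eq (ih f hf).1 hA, Set.preimage_comp,
      (ih f hf).2 _ (hT hA)]

lemma ae_eq_zero_off (hL : IsPF m T L) {B : Set X} (hB : MeasurableSet B)
    (hinv : ∀ᵐ x ∂m, x ∈ B → T x ∈ B) (hf : Integrable f m) (hfB : ∀ᵐ x ∂m, x ∉ B → f x = 0) :
    ∀ᵐ x ∂m, x ∉ B → L f x = 0 := by
  refine (ae_restrict_iff' hB.compl).1 <|
    (hL.integrable hf).restrict.ae_eq_zero_of_forall_setIntegral_eq_zero fun A hA _ => ?_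
  rw [Measure.restrict_restrict hA, hL.setIntegral_eq hf (hA.inter hB.compl)]
  refine setIntegral_eq_zero_of_ae_eq_zero ?_
  filter_upwards [hinv, hfB] with x hx hxf hxA
  exact hxf fun hxB => hxA.2 (hx hxB)

lemma iterate_ae_eq_zero_off (hL : IsPF m T L) (hT : Measurable T) {B : Set X}
    (hB : MeasurableSet B) (hinv : ∀ᵐ x ∂m, x ∈ B → T x ∈ B) (hf : Integrable f m)
    (hfB : ∀ᵐ x ∂m, x ∉ B → f x = 0) (n : ℕ) : ∀ᵐ x ∂m, x ∉ B → L^[n] f x = 0 := by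
  induction n with
  | zero => exact hfB
  | succ n ih =>
    rw [Function.iterate_succ']
    exact hL.ae_eq_zero_off hB hinv ((hL.iterate hT n).integrable hf) ih

lemma measure_pos_diff_preimage_eq_zero (hL : IsPF m T L) (hT : Measurable T) {u w : X → ℝ}
    (hu : Integrable u m) (hu0 : 0 ≤ᵐ[m] u) (hw : Measurable w) (huw : L u =ᵐ[m] w) :
    m ({x | 0 < u x} \ T ⁻¹' {x | 0 < w x}) = 0 := by
  set S := {x | w x ≤ 0}
  have hS : MeasurableSet S := measurableSet_le hw measurable_const
  have hint : ∫ x in T ⁻¹' S, u x ∂m = 0 := by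
    refine le_antisymm ?_ (setIntegral_nonneg_of_ae_restrict (ae_restrict_of_ae hu0))
    rw [← hL.setIntegral_eq hu hS, setIntegral_congr_ae hS (huw.mono fun x hx _ => hx)]
    exact setIntegral_nonpos hS fun x hx => hx
  have := (ae_restrict_iff' (hS.preimage hT)).1 <|
    (setIntegral_eq_zero_iff_of_nonneg_ae (ae_restrict_of_ae hu0) hu.integrableOn).1 hint
  refine measure_eq_zero_iff_ae_notMem.2 ?_
  filter_upwards [this] with x hx ⟨hpos, hxS⟩
  exact hpos.ne' (hx (show w (T x) ≤ 0 from not_lt.1 hxS))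

lemma integral_eq_of_tendsto (hL : IsPF m T L) (hT : Measurable T) (hf : Integrable f m)
    (hh : Integrable h m)
    (hlim : Tendsto (fun n => ∫ x, |L^[n] (fun x => f x - h x) x| ∂m) atTop (𝓝 0)) :
    ∫ x, h x ∂m = ∫ x, f x ∂m := by
  have hbound : ∀ n, |∫ x, f x ∂m - ∫ x, h x ∂m| ≤ ∫ x, |L^[n] (fun x => f x - h x) x| ∂m := by
    intro n
    have := (hL.iterate hT n).integral_eq (f := fun x => f x - h x) (hf.sub hh)
    rw [← integral_sub hf hh, ← this]
    exact abs_integral_le_integral_abs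
  have := abs_nonpos_iff.1 (ge_of_tendsto' hlim hbound)
  linarith

lemma ae_eq_zero_off_of_tendsto (hL : IsPF m T L) (hT : Measurable T) (hf : Integrable f m)
    (hh : Integrable h m)
    (hlim : Tendsto (fun n => ∫ x, |L^[n] (fun x => f x - h x) x| ∂m) atTop (𝓝 0))
    (hrec : ∃ᶠ n in atTop, L^[n] h =ᵐ[m] h) {B : Set X} (hB : MeasurableSet B)
    (hinv : ∀ᵐ x ∂m, x ∈ B → T x ∈ B) (hfB : ∀ᵐ x ∂m, x ∉ B → f x = 0) :
    ∀ᵐ x ∂m, x ∉ B → h x = 0 := by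
  have hbound : ∃ᶠ n in atTop,
      ∫ x in Bᶜ, |h x| ∂m ≤ ∫ x, |L^[n] (fun x => f x - h x) x| ∂m := by
    refine hrec.mono fun n hn => ?_
    have hfn := hL.iterate_ae_eq_zero_off hT hB hinv hf hfB n
    rw [← setIntegral_congr_ae hB.compl ?_]
    · exact setIntegral_le_integral ((hL.iterate hT n).integrable (hf.sub hh)).abs
        (Eventually.of_forall fun x => abs_nonneg _)
    filter_upwards [(hL.iterate hT n).sub_ae_eq hf hh, hfn, hn] with x hsub hfx hhx hxB
    rw [hsub, hfx hxB, hhx, zero_sub, abs_neg]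
  have hzero := le_antisymm (ge_of_tendsto_of_frequently hlim hbound)
    (setIntegral_nonneg_of_ae_restrict (Eventually.of_forall fun x => abs_nonneg _))
  have := (ae_restrict_iff' hB.compl).1 <|
    (setIntegral_eq_zero_iff_of_nonneg_ae (Eventually.of_forall fun x => abs_nonneg _)
      hh.abs.integrableOn).1 hzero
  filter_upwards [this] with x hx hxB
  exact abs_eq_zero.1 (hx hxB)

end IsPF

/-- Both the cycling `𝓛 g_{k,j} = g_{k,j+1}` inside `AsympPeriodic` and the support-cycling
hypothesis on the `ĝ_{i,j}` are, definitionally, instances of this for suitable `rel`. -/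
def IsCycleOf {α : Type*} (rel : α → α → Prop) (R : ℕ) (v : ℕ → α) : Prop :=
  (∀ j ∈ Finset.Icc 1 (R - 1), rel (v j) (v (j + 1))) ∧ rel (v R) (v 1)

namespace IsCycleOf

section Relation

variable {α : Type*} {rel rel' : α → α → Prop} {R : ℕ} {v : ℕ → α}

lemma exists_rel (hc : IsCycleOf rel R v) {j : ℕ} (hj : j ∈ Finset.Icc 1 R) :
    ∃ j' ∈ Finset.Icc 1 R, rel (v j) (v j') := by
  rw [Finset.mem_Icc] at hj
  by_cases hjR : j = R
  · exact ⟨1, Finset.mem_Icc.2 ⟨le_rfl, by omega⟩, hjR ▸ hc.2⟩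
  · exact ⟨j + 1, Finset.mem_Icc.2 ⟨by omega, by omega⟩, hc.1 j (Finset.mem_Icc.2 ⟨hj.1, by omega⟩)⟩

lemma mono (hc : IsCycleOf rel R v) (hR : 1 ≤ R)
    (h : ∀ j ∈ Finset.Icc 1 R, ∀ j' ∈ Finset.Icc 1 R, rel (v j) (v j') → rel' (v j) (v j')) :
    IsCycleOf rel' R v := by
  refine ⟨fun j hj => ?_,
    h R (Finset.mem_Icc.2 ⟨hR, le_rfl⟩) 1 (Finset.mem_Icc.2 ⟨le_rfl, hR⟩) hc.2⟩
  rw [Finset.mem_Icc] at hj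
  exact h j (Finset.mem_Icc.2 ⟨hj.1, by omega⟩) (j + 1) (Finset.mem_Icc.2 ⟨by omega, by omega⟩)
    (hc.1 j (Finset.mem_Icc.2 hj))

end Relation

variable {X : Type*} [MeasurableSpace X] {m : Measure X} {T : X → X} {L : (X → ℝ) → X → ℝ}
  {R : ℕ} {v : ℕ → X → ℝ}

section Iterate

variable (hL : IsPF m T L) (hT : Measurable T) (hv : ∀ j ∈ Finset.Icc 1 R, Integrable (v j) m)
  (hc : IsCycleOf (fun u w => L u =ᵐ[m] w) R v)
include hL hT hv hc

lemma iterate_ae_eq_add {j a : ℕ} (hj : 1 ≤ j) (hja : j + a ≤ R) :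
    L^[a] (v j) =ᵐ[m] v (j + a) := by
  induction a generalizing j with
  | zero => rfl
  | succ a ih =>
    rw [Function.iterate_succ_apply, show j + (a + 1) = j + 1 + a by omega]
    have hstep : L (v j) =ᵐ[m] v (j + 1) := hc.1 j (Finset.mem_Icc.2 ⟨hj, by omega⟩)
    exact ((hL.iterate hT a).congr_ae (hL.integrable (hv j (Finset.mem_Icc.2 ⟨hj, by omega⟩)))
      hstep).trans (ih (by omega) (by omega))

lemma iterate_ae_eq_wrap {j j' : ℕ} (hj : j ∈ Finset.Icc 1 R) (hj' : j' ∈ Finset.Icc 1 R) :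
    L^[(j' - 1) + (R + 1 - j)] (v j) =ᵐ[m] v j' := by
  rw [Finset.mem_Icc] at hj hj'
  have hone : L^[R + 1 - j] (v j) =ᵐ[m] v 1 := by
    rw [show R + 1 - j = 1 + (R - j) by omega, Function.iterate_add_apply, Function.iterate_one]
    have hR := iterate_ae_eq_add hL hT hv hc (a := R - j) hj.1 (by omega)
    rw [show j + (R - j) = R by omega] at hR
    exact (hL.congr_ae ((hL.iterate hT _).integrable (hv j (Finset.mem_Icc.2 hj))) hR).trans hc.2
  have hup := iterate_ae_eq_add hL hT hv hc (a := j' - 1) le_rfl (by omega)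
  rw [show 1 + (j' - 1) = j' by omega] at hup
  rw [Function.iterate_add_apply]
  exact ((hL.iterate hT _).congr_ae ((hL.iterate hT _).integrable (hv j (Finset.mem_Icc.2 hj)))
    hone).trans hup

lemma exists_iterate_ae_eq {j j' : ℕ} (hj : j ∈ Finset.Icc 1 R) (hj' : j' ∈ Finset.Icc 1 R) :
    ∃ n, L^[n] (v j) =ᵐ[m] v j' := by
  by_cases hjj' : j ≤ j'
  · refine ⟨j' - j, ?_⟩
    have := iterate_ae_eq_add hL hT hv hc (a := j' - j) (Finset.mem_Icc.1 hj).1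
      (by rw [Finset.mem_Icc] at hj'; omega)
    rwa [show j + (j' - j) = j' by omega] at this
  · exact ⟨_, iterate_ae_eq_wrap hL hT hv hc hj hj'⟩

lemma iterate_mul_ae_eq {j : ℕ} (hj : j ∈ Finset.Icc 1 R) (t : ℕ) :
    L^[t * R] (v j) =ᵐ[m] v j := by
  have hR : L^[R] (v j) =ᵐ[m] v j := by
    have := iterate_ae_eq_wrap hL hT hv hc hj hj
    rwa [show j - 1 + (R + 1 - j) = R by rw [Finset.mem_Icc] at hj; omega] at this
  induction t with
  | zero => rw [zero_mul]; rfl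
  | succ t ih =>
    rw [add_one_mul, Function.iterate_add_apply]
    exact ((hL.iterate hT _).congr_ae ((hL.iterate hT _).integrable (hv j hj)) hR).trans ih

lemma ae_eq_zero_off {B : Set X} (hB : MeasurableSet B) (hinv : ∀ᵐ x ∂m, x ∈ B → T x ∈ B)
    {j j' : ℕ} (hj : j ∈ Finset.Icc 1 R) (hj' : j' ∈ Finset.Icc 1 R)
    (h0 : ∀ᵐ x ∂m, x ∉ B → v j x = 0) : ∀ᵐ x ∂m, x ∉ B → v j' x = 0 := by
  obtain ⟨n, hn⟩ := exists_iterate_ae_eq hL hT hv hc hj hj'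
  filter_upwards [hn, hL.iterate_ae_eq_zero_off hT hB hinv (hv j hj) h0 n] with x hxn hx hxB
  rw [← hxn]
  exact hx hxB

end Iterate

end IsCycleOf

lemma avgDens_pos_iff {X : Type*} {R : ℕ} {v : ℕ → X → ℝ} {x : X}
    (hnn : ∀ j ∈ Finset.Icc 1 R, 0 ≤ v j x) :
    0 < avgDens R v x ↔ ∃ j ∈ Finset.Icc 1 R, 0 < v j x := by
  rw [avgDens, ← Finset.sum_pos_iff_of_nonneg hnn]
  rcases Nat.eq_zero_or_pos R with rfl | hR
  · simp
  · exact mul_pos_iff_of_pos_left (by positivity)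

section Densities

variable {X : Type*} [MeasurableSpace X] {m : Measure X}

def IsProbDensities (m : Measure X) (R : ℕ) (v : ℕ → X → ℝ) : Prop :=
  ∀ j ∈ Finset.Icc 1 R,
    Measurable (v j) ∧ Integrable (v j) m ∧ 0 ≤ᵐ[m] v j ∧ ∫ x, v j x ∂m = 1

def IsAEOrthogonal (m : Measure X) (s : ℕ) (r : ℕ → ℕ) (g : ℕ → ℕ → X → ℝ) : Prop :=
  ∀ i ∈ Finset.Icc 1 s, ∀ j ∈ Finset.Icc 1 (r i), ∀ k ∈ Finset.Icc 1 s,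
    ∀ l ∈ Finset.Icc 1 (r k), (i, j) ≠ (k, l) → (fun x => g i j x * g k l x) =ᵐ[m] 0

lemma avgDens_pos_ae_le {R : ℕ} {v : ℕ → X → ℝ} (hnn : ∀ j ∈ Finset.Icc 1 R, 0 ≤ᵐ[m] v j)
    {B : Set X} (h0 : ∀ j ∈ Finset.Icc 1 R, ∀ᵐ x ∂m, x ∉ B → v j x = 0) :
    {x | 0 < avgDens R v x} ≤ᵐ[m] B := by
  filter_upwards [(eventually_all_finset _).2 hnn, (eventually_all_finset _).2 h0]
    with x hxnn hx0 hpos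
  obtain ⟨j, hj, hjpos⟩ := (avgDens_pos_iff hxnn).1 hpos
  by_contra hxB
  exact hjpos.ne' (hx0 j hj hxB)

namespace IsProbDensities

variable {R : ℕ} {v : ℕ → X → ℝ}

lemma measurable_avgDens (hv : IsProbDensities m R v) : Measurable (avgDens R v) :=
  (Finset.measurable_sum _ fun j hj => (hv j hj).1).const_mul _

lemma measurableSet_avgDens_pos (hv : IsProbDensities m R v) :
    MeasurableSet {x | 0 < avgDens R v x} :=
  measurableSet_lt measurable_const hv.measurable_avgDens

lemma measure_avgDens_pos (hv : IsProbDensities m R v) (hR : 1 ≤ R) :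
    0 < m {x | 0 < avgDens R v x} := by
  have hint : ∫ x, avgDens R v x ∂m = 1 := by
    simp only [avgDens]
    rw [integral_const_mul, integral_finsetSum _ fun j hj => (hv j hj).2.1,
      Finset.sum_congr rfl fun j hj => (hv j hj).2.2.2]
    simp only [Finset.sum_const, Nat.card_Icc, add_tsub_cancel_right, nsmul_eq_mul, mul_one]
    exact inv_mul_cancel₀ (by positivity)
  refine pos_iff_ne_zero.2 fun h0 => one_ne_zero (hint.symm.trans (integral_eq_zero_of_ae ?_))
  filter_upwards [measure_eq_zero_iff_ae_notMem.1 h0,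
    (eventually_all_finset _).2 fun j hj => (hv j hj).2.2.1] with x hx hxnn
  exact le_antisymm (not_lt.1 hx) (mul_nonneg (by positivity) (Finset.sum_nonneg hxnn))

end IsProbDensities

end Densities

namespace IsAEOrthogonal

variable {X : Type*} [MeasurableSpace X] {m : Measure X} {s : ℕ} {r : ℕ → ℕ}
  {g : ℕ → ℕ → X → ℝ}

lemma ae_forall_mul_eq_zero (horth : IsAEOrthogonal m s r g) {k j : ℕ}
    (hk : k ∈ Finset.Icc 1 s) (hj : j ∈ Finset.Icc 1 (r k)) :
    ∀ᵐ x ∂m, ∀ k' ∈ Finset.Icc 1 s, ∀ j' ∈ Finset.Icc 1 (r k'), (k, j) ≠ (k', j') →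
      g k j x * g k' j' x = 0 := by
  refine (eventually_all_finset _).2 fun k' hk' => (eventually_all_finset _).2 fun j' hj' => ?_
  by_cases hne : (k, j) = (k', j')
  · exact .of_forall fun x h => absurd hne h
  · exact (horth k hk j hj k' hk' j' hj' hne).mono fun x hx _ => hx

lemma ae_sum_eq (horth : IsAEOrthogonal m s r g) {k j : ℕ} (hk : k ∈ Finset.Icc 1 s)
    (hj : j ∈ Finset.Icc 1 (r k)) (c : ℕ → ℕ → ℝ) :
    ∀ᵐ x ∂m, g k j x ≠ 0 →
      ∑ k' ∈ Finset.Icc 1 s, ∑ j' ∈ Finset.Icc 1 (r k'), c k' j' * g k' j' x = c k j * g k j x := by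
  filter_upwards [horth.ae_forall_mul_eq_zero hk hj] with x hx hne
  rw [Finset.sum_eq_single_of_mem k hk, Finset.sum_eq_single_of_mem j hj]
  · intro j' hj' hjj'
    rw [(mul_eq_zero.1 (hx k hk j' hj' (by simp [Ne.symm hjj']))).resolve_left hne, mul_zero]
  · intro k' hk' hkk'
    refine Finset.sum_eq_zero fun j' hj' => ?_
    rw [(mul_eq_zero.1 (hx k' hk' j' hj' (by simp [Ne.symm hkk']))).resolve_left hne, mul_zero]

lemma measure_avgDens_pos_inter (horth : IsAEOrthogonal m s r g)
    (hnn : ∀ k ∈ Finset.Icc 1 s, ∀ j ∈ Finset.Icc 1 (r k), 0 ≤ᵐ[m] g k j) {k k' : ℕ}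
    (hk : k ∈ Finset.Icc 1 s) (hk' : k' ∈ Finset.Icc 1 s) (hne : k ≠ k') :
    m ({x | 0 < avgDens (r k) (g k) x} ∩ {x | 0 < avgDens (r k') (g k') x}) = 0 := by
  refine measure_eq_zero_iff_ae_notMem.2 ?_
  filter_upwards [(eventually_all_finset _).2 (hnn k hk), (eventually_all_finset _).2 (hnn k' hk'),
    (eventually_all_finset _).2 fun j hj => (horth.ae_forall_mul_eq_zero hk hj)]
    with x hxnn hxnn' hx ⟨hpos, hpos'⟩
  obtain ⟨j, hj, hjpos⟩ := (avgDens_pos_iff hxnn).1 hpos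
  obtain ⟨j', hj', hjpos'⟩ := (avgDens_pos_iff hxnn').1 hpos'
  exact (mul_pos hjpos hjpos').ne' (hx j hj k' hk' j' hj' (by simp [hne]))

end IsAEOrthogonal

section Invariance

variable {X : Type*} [MeasurableSpace X] {m : Measure X} {T : X → X} {L : (X → ℝ) → X → ℝ}
  {R : ℕ} {v : ℕ → X → ℝ}

lemma IsCycleOf.support_of_isPF (hc : IsCycleOf (fun u w => L u =ᵐ[m] w) R v) (hR : 1 ≤ R)
    (hL : IsPF m T L) (hT : Measurable T) (hv : IsProbDensities m R v) :
    IsCycleOf (fun u w => m ({x | 0 < u x} \ T ⁻¹' {x | 0 < w x}) = 0) R v :=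
  hc.mono hR fun j hj j' hj' =>
    hL.measure_pos_diff_preimage_eq_zero hT (hv j hj).2.1 (hv j hj).2.2.1 (hv j' hj').1

lemma IsCycleOf.ae_avgDens_pos_comp
    (hc : IsCycleOf (fun u w => m ({x | 0 < u x} \ T ⁻¹' {x | 0 < w x}) = 0) R v)
    (hT : Measure.QuasiMeasurePreserving T m m) (hnn : ∀ j ∈ Finset.Icc 1 R, 0 ≤ᵐ[m] v j) :
    ∀ᵐ x ∂m, 0 < avgDens R v x → 0 < avgDens R v (T x) := by
  have hstep : ∀ j ∈ Finset.Icc 1 R,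
      ∀ᵐ x ∂m, 0 < v j x → ∃ j' ∈ Finset.Icc 1 R, 0 < v j' (T x) := by
    intro j hj
    obtain ⟨j', hj', hjj'⟩ := hc.exists_rel hj
    filter_upwards [measure_eq_zero_iff_ae_notMem.1 hjj'] with x hx hpos
    exact ⟨j', hj', not_not.1 fun h => hx ⟨hpos, h⟩⟩
  have hnn_all : ∀ᵐ x ∂m, ∀ j ∈ Finset.Icc 1 R, 0 ≤ v j x := (eventually_all_finset _).2 hnn
  filter_upwards [hnn_all, hT.ae hnn_all, (eventually_all_finset _).2 hstep]
    with x hxnn hTxnn hx hpos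
  obtain ⟨j, hj, hjpos⟩ := (avgDens_pos_iff hxnn).1 hpos
  exact (avgDens_pos_iff hTxnn).2 (hx j hj hjpos)

end Invariance

lemma measure_eq_zero_of_ae_le_of_ae_le {X : Type*} [MeasurableSpace X] {m : Measure X}
    {A B C : Set X} (hB : A ≤ᵐ[m] B) (hC : A ≤ᵐ[m] C) (hBC : m (B ∩ C) = 0) : m A = 0 :=
  measure_mono_null_ae (by simpa using hB.inter hC) hBC

lemma card_le_card_of_ae_le {X ι κ : Type*} [MeasurableSpace X] {m : Measure X}
    {I : Finset ι} {K : Finset κ} {E : ι → Set X} {F : κ → Set X}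
    (hE : ∀ i ∈ I, ∀ i' ∈ I, i ≠ i' → m (E i ∩ E i') = 0) (hF : ∀ k ∈ K, 0 < m (F k))
    (hEF : ∀ i ∈ I, ∃ k ∈ K, F k ≤ᵐ[m] E i) : I.card ≤ K.card :=
  Finset.card_le_card_of_forall_subsingleton (fun i k => F k ≤ᵐ[m] E i) hEF
    fun k hk i ⟨hi, hFi⟩ i' ⟨hi', hFi'⟩ => by_contra fun hne =>
      (hF k hk).ne' (measure_eq_zero_of_ae_le_of_ae_le hFi hFi' (hE i hi i' hi' hne))

section AsymptoticPeriodicity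

variable {X : Type*} [MeasurableSpace X] {m : Measure X} {T : X → X} {L : (X → ℝ) → X → ℝ}
  {s : ℕ} {r : ℕ → ℕ} {g : ℕ → ℕ → X → ℝ} {Λ : ℕ → ℕ → (X →₁[m] ℝ) →L[ℝ] ℝ}

lemma frequently_iterate_sum_ae_eq (hL : IsPF m T L) (hT : Measurable T)
    (hr : ∀ k ∈ Finset.Icc 1 s, 1 ≤ r k)
    (hg : ∀ k ∈ Finset.Icc 1 s, ∀ j ∈ Finset.Icc 1 (r k), Integrable (g k j) m)
    (hc : ∀ k ∈ Finset.Icc 1 s, IsCycleOf (fun u w => L u =ᵐ[m] w) (r k) (g k))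
    (c : ℕ → ℕ → ℝ) :
    ∃ᶠ n in atTop, L^[n] (fun x => ∑ k ∈ Finset.Icc 1 s, ∑ j ∈ Finset.Icc 1 (r k), c k j * g k j x)
      =ᵐ[m] fun x => ∑ k ∈ Finset.Icc 1 s, ∑ j ∈ Finset.Icc 1 (r k), c k j * g k j x := by
  have hP : 1 ≤ ∏ k ∈ Finset.Icc 1 s, r k := Finset.one_le_prod' hr
  refine frequently_atTop.2 fun a =>
    ⟨a * ∏ k ∈ Finset.Icc 1 s, r k, Nat.le_mul_of_pos_right a hP, ?_⟩
  simp only [Finset.sum_sigma']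
  refine (hL.iterate hT _).sum_mul_ae_eq_of_ae_eq _ (fun p hp => ?_) fun p hp => ?_ <;>
    obtain ⟨hk, hj⟩ := Finset.mem_sigma.1 hp
  · exact hg _ hk _ hj
  · obtain ⟨q, hq⟩ := Finset.dvd_prod_of_mem r hk
    rw [hq, mul_comm (r p.1), ← mul_assoc]
    exact (hc _ hk).iterate_mul_ae_eq hL hT (hg _ hk) hj _

namespace AsympPeriodic

section Components

variable (hap : AsympPeriodic m L s r g Λ)
include hap

lemma one_le_period (k : ℕ) (hk : k ∈ Finset.Icc 1 s) : 1 ≤ r k := hap.2.1 k hk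

lemma isProbDensities (k : ℕ) (hk : k ∈ Finset.Icc 1 s) : IsProbDensities m (r k) (g k) :=
  hap.2.2.1 k hk

lemma isAEOrthogonal : IsAEOrthogonal m s r g := hap.2.2.2.1

lemma isCycleOf (k : ℕ) (hk : k ∈ Finset.Icc 1 s) :
    IsCycleOf (fun u w => L u =ᵐ[m] w) (r k) (g k) :=
  hap.2.2.2.2.1 k hk

end Components


variable (hL : IsPF m T L) (hT : Measurable T) (hap : AsympPeriodic m L s r g Λ)
include hL hT hap

theorem exists_avgDens_pos_ae_le [IsFiniteMeasure m] {B : Set X} (hB : MeasurableSet B) (hinv : ∀ᵐ x ∂m, x ∈ B → T x ∈ B) (hpos : 0 < m B) :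
    ∃ k ∈ Finset.Icc 1 s, {x | 0 < avgDens (r k) (g k) x} ≤ᵐ[m] B := by
  have hconv := hap.2.2.2.2.2
  have hgint : ∀ k ∈ Finset.Icc 1 s, ∀ j ∈ Finset.Icc 1 (r k), Integrable (g k j) m :=
    fun k hk j hj => (hap.isProbDensities k hk j hj).2.1
  have hf : Integrable (B.indicator 1) m := (integrable_const (1 : ℝ)).indicator hB
  set c : ℕ → ℕ → ℝ := fun k j => Λ k j (hf.toL1 _)
  set H : X → ℝ := fun x => ∑ k ∈ Finset.Icc 1 s, ∑ j ∈ Finset.Icc 1 (r k), c k j * g k j x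
  have hH : Integrable H m := integrable_finsetSum _ fun k hk =>
    integrable_finsetSum _ fun j hj => (hgint k hk j hj).const_mul _
  have hHB : ∀ᵐ x ∂m, x ∉ B → H x = 0 :=
    hL.ae_eq_zero_off_of_tendsto hT hf hH (hconv _ hf)
      (frequently_iterate_sum_ae_eq hL hT hap.one_le_period hgint hap.isCycleOf c) hB hinv
      (.of_forall fun x hx => Set.indicator_of_notMem hx _)
  obtain ⟨k, hk, j, hj, hcoef⟩ : ∃ k ∈ Finset.Icc 1 s, ∃ j ∈ Finset.Icc 1 (r k), c k j ≠ 0 := by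
    by_contra! hc0
    have hH0 : H = 0 := funext fun x => Finset.sum_eq_zero fun k hk =>
      Finset.sum_eq_zero fun j hj => by rw [hc0 k hk j hj, zero_mul]
    have hint : ∫ x, H x ∂m = m.real B :=
      (hL.integral_eq_of_tendsto hT hf hH (hconv _ hf)).trans (integral_indicator_one hB)
    simp only [hH0, Pi.zero_apply, integral_zero] at hint
    exact (ENNReal.toReal_pos hpos.ne' (measure_ne_top m B)).ne hint
  have hgkj : ∀ᵐ x ∂m, x ∉ B → g k j x = 0 := by
    filter_upwards [hHB, hap.isAEOrthogonal.ae_sum_eq hk hj c] with x hHx hsum hxB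
    by_contra hne
    exact mul_ne_zero hcoef hne ((hsum hne).symm.trans (hHx hxB))
  exact ⟨k, hk, avgDens_pos_ae_le (fun j hj => (hap.isProbDensities k hk j hj).2.2.1)
    fun j' hj' => (hap.isCycleOf k hk).ae_eq_zero_off hL hT (hgint k hk) hB hinv hj hj' hgkj⟩


lemma ae_avgDens_pos_comp {k : ℕ} (hk : k ∈ Finset.Icc 1 s)
    (hqmp : Measure.QuasiMeasurePreserving T m m) :
    ∀ᵐ x ∂m, 0 < avgDens (r k) (g k) x → 0 < avgDens (r k) (g k) (T x) :=
  ((hap.isCycleOf k hk).support_of_isPF (hap.one_le_period k hk) hL hT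
    (hap.isProbDensities k hk)).ae_avgDens_pos_comp hqmp
    fun j hj => (hap.isProbDensities k hk j hj).2.2.1

lemma measure_inter_iUnion_avgDens_pos [IsFiniteMeasure m] {E : Set X} (hE : MeasurableSet E)
    (hinv : ∀ᵐ x ∂m, x ∈ E → T x ∈ E) (hpos : 0 < m E) :
    0 < m (E ∩ ⋃ k ∈ Finset.Icc 1 s, {x | 0 < avgDens (r k) (g k) x}) := by
  obtain ⟨k, hk, hFk⟩ := hap.exists_avgDens_pos_ae_le hL hT hE hinv hpos
  calc 0 < m {x | 0 < avgDens (r k) (g k) x} :=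
        (hap.isProbDensities k hk).measure_avgDens_pos (hap.one_le_period k hk)
    _ = m ({x | 0 < avgDens (r k) (g k) x} ∩ E) := by
        rw [← measure_inter_add_sdiff _ hE, ae_le_set.1 hFk, add_zero]
    _ ≤ m (E ∩ ⋃ k ∈ Finset.Icc 1 s, {x | 0 < avgDens (r k) (g k) x}) :=
        measure_mono fun x hx => ⟨hx.2, Set.mem_biUnion hk hx.1⟩

lemma measure_avgDens_pos_diff_eq_zero_or [IsFiniteMeasure m] {k : ℕ}
    (hk : k ∈ Finset.Icc 1 s) (hqmp : Measure.QuasiMeasurePreserving T m m)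
    {E : Set X} (hE : MeasurableSet E) (hinv : ∀ᵐ x ∂m, x ∈ E → T x ∈ E) :
    m ({x | 0 < avgDens (r k) (g k) x} \ E) = 0 ∨
      m (E ∩ {x | 0 < avgDens (r k) (g k) x}) = 0 := by
  set F : ℕ → Set X := fun k => {x | 0 < avgDens (r k) (g k) x}
  by_cases hEF : m (E ∩ F k) = 0
  · exact .inr hEF
  refine .inl (ae_le_set.1 ?_)
  obtain ⟨k', hk', hFk'⟩ := hap.exists_avgDens_pos_ae_le hL hT
    (hE.inter (hap.isProbDensities k hk).measurableSet_avgDens_pos)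
    (hinv.mp ((hap.ae_avgDens_pos_comp hL hT hk hqmp).mono fun x hF hE hx => ⟨hE hx.1, hF hx.2⟩))
    (pos_iff_ne_zero.2 hEF)
  obtain rfl : k' = k := by
    by_contra hne
    refine ((hap.isProbDensities k' hk').measure_avgDens_pos (hap.one_le_period k' hk')).ne'
      (measure_eq_zero_of_ae_le_of_ae_le EventuallyLE.rfl
        (hFk'.trans Set.inter_subset_right.eventuallyLE) ?_)
    exact hap.isAEOrthogonal.measure_avgDens_pos_inter
      (fun k hk j hj => (hap.isProbDensities k hk j hj).2.2.1) hk' hk hne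
  exact hFk'.trans Set.inter_subset_left.eventuallyLE

end AsympPeriodic

end AsymptoticPeriodicity

theorem stmt_0_general {X : Type*} [MeasurableSpace X] (m : Measure X) [IsProbabilityMeasure m]
    (T : X → X) (hT : Measurable T)
    (hns : ∀ A : Set X, MeasurableSet A → m A = 0 → m (T ⁻¹' A) = 0)
    (L : (X → ℝ) → X → ℝ) (hL : IsPF m T L)
    (s : ℕ) (r : ℕ → ℕ) (g : ℕ → ℕ → X → ℝ) (Λ : ℕ → ℕ → (X →₁[m] ℝ) →L[ℝ] ℝ)
    (hap : AsympPeriodic m L s r g Λ)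
    (s' : ℕ) (r' : ℕ → ℕ) (g' : ℕ → ℕ → X → ℝ)
    (hr' : ∀ i ∈ Finset.Icc 1 s', 1 ≤ r' i)
    (hdens : ∀ i ∈ Finset.Icc 1 s', ∀ j ∈ Finset.Icc 1 (r' i),
      Measurable (g' i j) ∧ Integrable (g' i j) m ∧ 0 ≤ᵐ[m] g' i j ∧ ∫ x, g' i j x ∂m = 1)
    (horth : ∀ i ∈ Finset.Icc 1 s', ∀ j ∈ Finset.Icc 1 (r' i), ∀ k ∈ Finset.Icc 1 s',
      ∀ l ∈ Finset.Icc 1 (r' k), (i, j) ≠ (k, l) →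
        (fun x => g' i j x * g' k l x) =ᵐ[m] 0)
    (hcyc : ∀ i ∈ Finset.Icc 1 s',
      (∀ j ∈ Finset.Icc 1 (r' i - 1),
        m ({x | 0 < g' i j x} \ T ⁻¹' {x | 0 < g' i (j + 1) x}) = 0) ∧
        m ({x | 0 < g' i (r' i) x} \ T ⁻¹' {x | 0 < g' i 1 x}) = 0) :
    (∀ i ∈ Finset.Icc 1 s',
      0 < m ({x | 0 < avgDens (r' i) (g' i) x} ∩
          ⋃ k ∈ Finset.Icc 1 s, {x | 0 < avgDens (r k) (g k) x}) ∧
        ∀ k ∈ Finset.Icc 1 s,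
          m ({x | 0 < avgDens (r k) (g k) x} \ {x | 0 < avgDens (r' i) (g' i) x}) = 0 ∨
            m ({x | 0 < avgDens (r' i) (g' i) x} ∩ {x | 0 < avgDens (r k) (g k) x}) = 0) ∧
      s' ≤ s := by
  have hdens' : ∀ i ∈ Finset.Icc 1 s', IsProbDensities m (r' i) (g' i) := hdens
  have hqmp : Measure.QuasiMeasurePreserving T m m :=
    ⟨hT, .mk fun A hA h => by rw [Measure.map_apply hT hA]; exact hns A hA h⟩
  have hEinv (i : ℕ) (hi : i ∈ Finset.Icc 1 s') :
      ∀ᵐ x ∂m, 0 < avgDens (r' i) (g' i) x → 0 < avgDens (r' i) (g' i) (T x) :=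
    IsCycleOf.ae_avgDens_pos_comp (hcyc i hi) hqmp fun j hj => (hdens i hi j hj).2.2.1
  have hEpos (i : ℕ) (hi : i ∈ Finset.Icc 1 s') := (hdens' i hi).measure_avgDens_pos (hr' i hi)
  have hEmeas (i : ℕ) (hi : i ∈ Finset.Icc 1 s') := (hdens' i hi).measurableSet_avgDens_pos
  refine ⟨fun i hi => ⟨hap.measure_inter_iUnion_avgDens_pos hL hT (hEmeas i hi) (hEinv i hi)
    (hEpos i hi), fun k hk => hap.measure_avgDens_pos_diff_eq_zero_or hL hT hk hqmp
    (hEmeas i hi) (hEinv i hi)⟩, ?_⟩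
  simpa using card_le_card_of_ae_le
    (fun i hi i' hi' hne => IsAEOrthogonal.measure_avgDens_pos_inter horth
      (fun i hi j hj => (hdens i hi j hj).2.2.1) hi hi' hne)
    (fun k hk => (hap.isProbDensities k hk).measure_avgDens_pos (hap.one_le_period k hk))
    fun i hi => hap.exists_avgDens_pos_ae_le hL hT (hEmeas i hi) (hEinv i hi) (hEpos i hi)

/-- **Theorem 3.1(1).** Let `𝓛_T` be asymptotically periodic with data
`s, r, g, Λ` and let `ĝ_{i,j}` (`1 ≤ i ≤ s', 1 ≤ j ≤ r' i`) be mutually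
orthogonal probability densities whose supports are cycled by `T`.  With
`ĝ_i = (1/r' i) ∑_j ĝ_{i,j}` and `g_k = (1/r k) ∑_j g_{k,j}`:
(a) `m({ĝ_i > 0} ∩ ⋃_k {g_k > 0}) > 0`;
(b) for every `k`, either `m({g_k > 0} \ {ĝ_i > 0}) = 0` or
`m({ĝ_i > 0} ∩ {g_k > 0}) = 0`; and (c) `s' ≤ s`. -/
theorem stmt_0 {X : Type*} [MeasurableSpace X] (m : Measure X) [IsProbabilityMeasure m]
    (T : X → X) (hT : Measurable T)
    (hns : ∀ A : Set X, MeasurableSet A → m A = 0 → m (T ⁻¹' A) = 0)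
    (L : (X → ℝ) → X → ℝ) (hL : IsPF m T L)
    (s : ℕ) (r : ℕ → ℕ) (g : ℕ → ℕ → X → ℝ) (Λ : ℕ → ℕ → (X →₁[m] ℝ) →L[ℝ] ℝ)
    (hap : AsympPeriodic m L s r g Λ)
    (s' : ℕ) (r' : ℕ → ℕ) (g' : ℕ → ℕ → X → ℝ)
    (hs' : 1 ≤ s') (hr' : ∀ i ∈ Finset.Icc 1 s', 1 ≤ r' i)
    (hdens : ∀ i ∈ Finset.Icc 1 s', ∀ j ∈ Finset.Icc 1 (r' i),
      Measurable (g' i j) ∧ Integrable (g' i j) m ∧ 0 ≤ᵐ[m] g' i j ∧ ∫ x, g' i j x ∂m = 1)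
    (horth : ∀ i ∈ Finset.Icc 1 s', ∀ j ∈ Finset.Icc 1 (r' i), ∀ k ∈ Finset.Icc 1 s',
      ∀ l ∈ Finset.Icc 1 (r' k), (i, j) ≠ (k, l) →
        (fun x => g' i j x * g' k l x) =ᵐ[m] 0)
    (hcyc : ∀ i ∈ Finset.Icc 1 s',
      (∀ j ∈ Finset.Icc 1 (r' i - 1),
        m ({x | 0 < g' i j x} \ T ⁻¹' {x | 0 < g' i (j + 1) x}) = 0) ∧
        m ({x | 0 < g' i (r' i) x} \ T ⁻¹' {x | 0 < g' i 1 x}) = 0) :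
    (∀ i ∈ Finset.Icc 1 s',
      0 < m ({x | 0 < avgDens (r' i) (g' i) x} ∩
          ⋃ k ∈ Finset.Icc 1 s, {x | 0 < avgDens (r k) (g k) x}) ∧
        ∀ k ∈ Finset.Icc 1 s,
          m ({x | 0 < avgDens (r k) (g k) x} \ {x | 0 < avgDens (r' i) (g' i) x}) = 0 ∨
            m ({x | 0 < avgDens (r' i) (g' i) x} ∩ {x | 0 < avgDens (r k) (g k) x}) = 0) ∧
      s' ≤ s :=
  stmt_0_general m T hT hns L hL s r g Λ hap s' r' g' hr' hdens horth hcyc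
end
end

section
/- In the skew product setting, suppose the Perron–Frobenius operator 𝓛_S is asymptotically periodic with periodic probability densities ĝ_{i,j} (1 ≤ i ≤ ŝ, 1 ≤ j ≤ r̂(i)) which, as elements of L¹(m×P), depend only on the x-variable (i.e. ĝ_{i,j} ∈ L¹(m)). If the set {y ∈ Y : T_y x = x for all x ∈ X} is measurable and has positive η-measure, then r̂(i) = 1 for every i ∈ {1,…,ŝ}. -/
open MeasureTheory Filter Topology

noncomputable section

/-!
If `r̂ i ≥ 2`, the densities `ĝ_{i,1}` and `ĝ_{i,2} = 𝓛_S ĝ_{i,1}` have disjoint supports.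
Duality of `𝓛_S` then says that `S` almost never maps the support of `ĝ_{i,1}` into itself:
`∫_{S⁻¹A} ĝ_{i,1} = ∫_A ĝ_{i,2} = 0` for `A = supp ĝ_{i,1}`. But whenever `T_{ω₀}` is the identity,
which happens with probability `η{T_y = id} > 0`, the skew product fixes the `x`-coordinate,
and `ĝ_{i,1}` only depends on `x`; so a set of positive measure of its support is mapped into it.
-/

open Function

theorem IsPF.measure_support_inter_preimage_support_eq_zero {α : Type*} [MeasurableSpace α]
    {μ : Measure α} {T : α → α} {L : (α → ℝ) → α → ℝ} (hL : IsPF μ T L) {f g : α → ℝ}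
    (hfm : Measurable f) (hfi : Integrable f μ) (hf0 : 0 ≤ᵐ[μ] f) (hLf : L f =ᵐ[μ] g)
    (hfg : (fun x => f x * g x) =ᵐ[μ] 0) :
    μ (support f ∩ T ⁻¹' support f) = 0 := by
  have hA : MeasurableSet (support f) := measurableSet_support hfm
  have hg : g =ᵐ[μ.restrict (support f)] 0 := by
    filter_upwards [ae_restrict_of_ae hfg, ae_restrict_mem hA] with x hx hxA
    exact (mul_eq_zero.1 hx).resolve_left hxA
  have hpre : ∫ x in T ⁻¹' support f, f x ∂μ = 0 := by
    rw [← (hL f hfi).2 _ hA, integral_congr_ae (ae_restrict_of_ae hLf), integral_congr_ae hg]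
    simp
  by_contra hpos
  exact ((setIntegral_pos_iff_support_of_nonneg_ae (ae_restrict_of_ae hf0)
    hfi.integrableOn).2 (pos_iff_ne_zero.2 hpos)).ne' hpre

theorem measure_setOf_apply_zero_mem {Y : Type*} [MeasurableSpace Y] {η : Measure Y}
    {P : Measure (ℕ → Y)}
    (hP : ∀ (n : ℕ) (A : ℕ → Set Y), (∀ i, MeasurableSet (A i)) →
      P {ω : ℕ → Y | ∀ i < n, ω i ∈ A i} = ∏ i ∈ Finset.range n, η (A i))
    {E : Set Y} (hE : MeasurableSet E) :
    P {ω | ω 0 ∈ E} = η E := by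
  simpa using hP 1 (fun _ => E) fun _ => hE

theorem stmt_2_general {X Y : Type*} [MeasurableSpace X] [MeasurableSpace Y]
    (m : Measure X) [IsProbabilityMeasure m]
    (η : Measure Y) [IsProbabilityMeasure η]
    (P : Measure (ℕ → Y)) [IsProbabilityMeasure P]
    (hP : ∀ (n : ℕ) (A : ℕ → Set Y), (∀ i, MeasurableSet (A i)) →
      P {ω : ℕ → Y | ∀ i < n, ω i ∈ A i} = ∏ i ∈ Finset.range n, η (A i))
    (T : Y → X → X)
    (LS : (X × (ℕ → Y) → ℝ) → X × (ℕ → Y) → ℝ)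
    (hLS : IsPF (m.prod P)
      (fun p : X × (ℕ → Y) => (T (p.2 0) p.1, fun n => p.2 (n + 1))) LS)
    (s' : ℕ) (r' : ℕ → ℕ) (g' : ℕ → ℕ → X → ℝ)
    (Λ : ℕ → ℕ → ((X × (ℕ → Y)) →₁[m.prod P] ℝ) →L[ℝ] ℝ)
    (hap : AsympPeriodic (m.prod P) LS s' r' (fun i j p => g' i j p.1) Λ)
    (hIdmeas : MeasurableSet {y : Y | ∀ x, T y x = x})
    (hIdpos : 0 < η {y : Y | ∀ x, T y x = x}) :
    ∀ i ∈ Finset.Icc 1 s', r' i = 1 := by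
  obtain ⟨-, hr, hdens, horth, hcyc, -⟩ := hap
  intro i hi
  by_contra hne
  have hr_two : 2 ≤ r' i := by have := hr i hi; omega
  have h1 : 1 ∈ Finset.Icc 1 (r' i) := Finset.mem_Icc.2 ⟨le_rfl, by omega⟩
  have h2 : 2 ∈ Finset.Icc 1 (r' i) := Finset.mem_Icc.2 ⟨by omega, hr_two⟩
  obtain ⟨hmeas, hint, hnonneg, hmass⟩ := hdens i hi 1 h1
  set S := fun p : X × (ℕ → Y) => (T (p.2 0) p.1, fun n => p.2 (n + 1))
  set F := fun p : X × (ℕ → Y) => g' i 1 p.1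
  set B := support (g' i 1)
  set E := {y : Y | ∀ x, T y x = x}
  have hsupp : support F = B ×ˢ Set.univ := by
    ext p; simp [F, B]
  have hB : m B ≠ 0 := by
    have hpos : 0 < m.prod P (support F) :=
      (integral_pos_iff_support_of_nonneg_ae hnonneg hint).1 (by rw [hmass]; exact one_pos)
    simpa [hsupp, Measure.prod_prod] using hpos.ne'
  have hnull : m.prod P (support F ∩ S ⁻¹' support F) = 0 :=
    hLS.measure_support_inter_preimage_support_eq_zero hmeas hint hnonneg
      ((hcyc i hi).1 1 (Finset.mem_Icc.2 ⟨le_rfl, by omega⟩)) (horth i hi 1 h1 i hi 2 h2 (by simp))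
  have hfixed : B ×ˢ {ω : ℕ → Y | ω 0 ∈ E} ⊆ support F ∩ S ⁻¹' support F := by
    rintro ⟨x, ω⟩ ⟨hx, hω⟩
    simp only [hsupp, S, Set.mem_inter_iff, Set.mem_preimage, Set.mem_prod, Set.mem_univ, and_true]
    exact ⟨hx, by rwa [hω x]⟩
  have hfixed_null := measure_mono_null hfixed hnull
  rw [Measure.prod_prod, measure_setOf_apply_zero_mem hP hIdmeas] at hfixed_null
  exact mul_ne_zero hB hIdpos.ne' hfixed_null

/-- **Theorem 3.2.** In the skew product setting, suppose `𝓛_S` is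
asymptotically periodic with periodic probability densities `ĝ_{i,j}`
depending only on the `x`-variable.  If the set of parameters `y` for which
`T_y` is the identity map has positive `η`-measure, then `r̂ i = 1` for every
`i ∈ {1,…,ŝ}`. -/
theorem stmt_2 {X Y : Type*} [MeasurableSpace X] [MeasurableSpace Y]
    (m : Measure X) [IsProbabilityMeasure m]
    (η : Measure Y) [IsProbabilityMeasure η]
    (P : Measure (ℕ → Y)) [IsProbabilityMeasure P]
    (hP : ∀ (n : ℕ) (A : ℕ → Set Y), (∀ i, MeasurableSet (A i)) →
      P {ω : ℕ → Y | ∀ i < n, ω i ∈ A i} = ∏ i ∈ Finset.range n, η (A i))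
    (T : Y → X → X) (hTmeas : Measurable fun p : X × Y => T p.2 p.1)
    (hTns : ∀ y : Y, ∀ A : Set X, MeasurableSet A → m A = 0 → m (T y ⁻¹' A) = 0)
    (LS : (X × (ℕ → Y) → ℝ) → X × (ℕ → Y) → ℝ)
    (hLS : IsPF (m.prod P)
      (fun p : X × (ℕ → Y) => (T (p.2 0) p.1, fun n => p.2 (n + 1))) LS)
    (s' : ℕ) (r' : ℕ → ℕ) (g' : ℕ → ℕ → X → ℝ)
    (Λ : ℕ → ℕ → ((X × (ℕ → Y)) →₁[m.prod P] ℝ) →L[ℝ] ℝ)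
    (hap : AsympPeriodic (m.prod P) LS s' r' (fun i j p => g' i j p.1) Λ)
    (hIdmeas : MeasurableSet {y : Y | ∀ x, T y x = x})
    (hIdpos : 0 < η {y : Y | ∀ x, T y x = x}) :
    ∀ i ∈ Finset.Icc 1 s', r' i = 1 :=
  stmt_2_general m η P hP T LS hLS s' r' g' Λ hap hIdmeas hIdpos
end
end

section
/- In the skew product setting, suppose the Perron–Frobenius operator 𝓛_S is asymptotically periodic with periodic probability densities ĝ_{i,j} (1 ≤ i ≤ ŝ, 1 ≤ j ≤ r̂(i)) which, as elements of L¹(m×P), depend only on the x-variable (i.e. ĝ_{i,j} ∈ L¹(m)). Then there exists a measurable set Y₀ ⊆ Y with η(Y₀) = 1 such that for every y ∈ Y₀ and every i ∈ {1,…,ŝ}: m({ĝ_{i,j} > 0} \ T_y⁻¹{ĝ_{i,j+1} > 0}) = 0 for 1 ≤ j ≤ r̂(i)−1, and m({ĝ_{i,r̂(i)} > 0} \ T_y⁻¹{ĝ_{i,1} > 0}) = 0. -/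
open MeasureTheory Filter Topology

noncomputable section

/-!
A Perron–Frobenius operator carries the support of a nonnegative density into the support of
its image: if `L f = g` then `∫_{S⁻¹{g = 0}} f = ∫_{{g = 0}} g = 0`, so `S` maps `{f > 0}` into
`{g > 0}` up to a null set. For the skew product `S (x, ω) = (T_{ω₀} x, σ ω)` and densities
depending on `x` only, this exceptional set only involves the coordinate `ω₀`, whose law is `η`;
Fubini then gives the inclusion `{ĝ_{i,j} > 0} ⊆ T_y⁻¹{ĝ_{i,j+1} > 0}` for `η`-a.e. `y`.
-/

theorem IsPF.measure_pos_diff_preimage_pos_eq_zero {α : Type*} [MeasurableSpace α]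
    {μ : Measure α} {S : α → α} {L : (α → ℝ) → α → ℝ} (hL : IsPF μ S L) {f g : α → ℝ}
    (hf : Integrable f μ) (hf₀ : 0 ≤ᵐ[μ] f) (hg : Measurable g) (hg₀ : 0 ≤ᵐ[μ] g)
    (hLf : L f =ᵐ[μ] g) :
    μ ({x | 0 < f x} \ S ⁻¹' {x | 0 < g x}) = 0 := by
  set C : Set α := {x | 0 < g x}ᶜ
  have hC : MeasurableSet C := (measurableSet_lt measurable_const hg).compl
  have hgC : ∫ x in C, g x ∂μ = 0 := by
    refine integral_eq_zero_of_ae ?_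
    filter_upwards [ae_restrict_of_ae hg₀, ae_restrict_mem hC] with x hx hxC
    exact le_antisymm (not_lt.mp hxC) hx
  have hfC : ∫ x in S ⁻¹' C, f x ∂μ = 0 := by
    rw [← (hL f hf).2 C hC, integral_congr_ae (ae_restrict_of_ae hLf), hgC]
  have hf_zero : f =ᵐ[μ.restrict (S ⁻¹' C)] 0 :=
    (integral_eq_zero_iff_of_nonneg_ae (ae_restrict_of_ae hf₀) hf.restrict).mp hfC
  have hnull : μ ({x | f x ≠ 0} ∩ S ⁻¹' C) = 0 :=
    nonpos_iff_eq_zero.1 ((Measure.le_restrict_apply _ _).trans_eq (ae_iff.mp hf_zero))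
  refine measure_mono_null ?_ hnull
  exact fun x hx => ⟨hx.1.ne', hx.2⟩

theorem Measure.map_eval_zero_eq_of_cylinder {Y : Type*} [MeasurableSpace Y]
    {η : Measure Y} {P : Measure (ℕ → Y)}
    (hP : ∀ (n : ℕ) (A : ℕ → Set Y), (∀ i, MeasurableSet (A i)) →
      P {ω : ℕ → Y | ∀ i < n, ω i ∈ A i} = ∏ i ∈ Finset.range n, η (A i)) :
    P.map (fun ω => ω 0) = η := by
  ext A hA
  rw [Measure.map_apply (measurable_pi_apply 0) hA]
  simpa [Set.preimage, Nat.lt_one_iff] using hP 1 (fun _ => A) (fun _ => hA)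

theorem Measure.prod_map_eq_map_swap {α β γ : Type*} [MeasurableSpace α] [MeasurableSpace β]
    [MeasurableSpace γ] (μ : Measure α) (ν : Measure β) [SFinite μ] [SFinite ν] {f : β → γ}
    (hf : Measurable f) :
    (ν.map f).prod μ = (μ.prod ν).map (fun p => (f p.2, p.1)) := by
  rw [← Measure.map_id (μ := μ), Measure.map_prod_map _ _ hf measurable_id, ← Measure.prod_swap,
    Measure.map_map (hf.prodMap measurable_id) measurable_swap, Measure.map_id]
  rfl

def skewProduct {X Y : Type*} (T : Y → X → X) (p : X × (ℕ → Y)) : X × (ℕ → Y) :=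
  (T (p.2 0) p.1, fun n => p.2 (n + 1))

theorem ae_measure_diff_preimage_eq_zero_of_skewProduct {X Y : Type*} [MeasurableSpace X]
    [MeasurableSpace Y] {m : Measure X} [SFinite m] {P : Measure (ℕ → Y)} [SFinite P]
    {T : Y → X → X} (hT : Measurable fun p : X × Y => T p.2 p.1) {A B : Set X}
    (hA : MeasurableSet A) (hB : MeasurableSet B)
    (h : m.prod P (Prod.fst ⁻¹' A \ skewProduct T ⁻¹' (Prod.fst ⁻¹' B)) = 0) :
    ∀ᵐ y ∂(P.map fun ω => ω 0), m (A \ T y ⁻¹' B) = 0 := by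
  set F : Set (Y × X) := {q | q.2 ∈ A \ T q.1 ⁻¹' B}
  have hF : MeasurableSet F := (measurable_snd hA).diff ((hT.comp measurable_swap) hB)
  have hF₀ : (P.map fun ω => ω 0).prod m F = 0 := by
    rw [Measure.prod_map_eq_map_swap m P (measurable_pi_apply 0),
      Measure.map_apply (by fun_prop) hF]
    exact h
  exact Measure.measure_ae_null_of_prod_null hF₀

theorem stmt_3_general {X Y : Type*} [MeasurableSpace X] [MeasurableSpace Y]
    (m : Measure X) [IsProbabilityMeasure m]
    (η : Measure Y) [IsProbabilityMeasure η]
    (P : Measure (ℕ → Y)) [IsProbabilityMeasure P]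
    (hP : ∀ (n : ℕ) (A : ℕ → Set Y), (∀ i, MeasurableSet (A i)) →
      P {ω : ℕ → Y | ∀ i < n, ω i ∈ A i} = ∏ i ∈ Finset.range n, η (A i))
    (T : Y → X → X) (hTmeas : Measurable fun p : X × Y => T p.2 p.1)
    (LS : (X × (ℕ → Y) → ℝ) → X × (ℕ → Y) → ℝ)
    (hLS : IsPF (m.prod P)
      (fun p : X × (ℕ → Y) => (T (p.2 0) p.1, fun n => p.2 (n + 1))) LS)
    (s' : ℕ) (r' : ℕ → ℕ) (g' : ℕ → ℕ → X → ℝ)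
    (Λ : ℕ → ℕ → ((X × (ℕ → Y)) →₁[m.prod P] ℝ) →L[ℝ] ℝ)
    (hap : AsympPeriodic (m.prod P) LS s' r' (fun i j p => g' i j p.1) Λ) :
    ∃ Y₀ : Set Y, MeasurableSet Y₀ ∧ η Y₀ = 1 ∧
      ∀ y ∈ Y₀, ∀ i ∈ Finset.Icc 1 s',
        (∀ j ∈ Finset.Icc 1 (r' i - 1),
          m ({x | 0 < g' i j x} \ T y ⁻¹' {x | 0 < g' i (j + 1) x}) = 0) ∧
          m ({x | 0 < g' i (r' i) x} \ T y ⁻¹' {x | 0 < g' i 1 x}) = 0 := by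
  obtain ⟨-, hr, hdens, -, hcycle, -⟩ := hap
  obtain ⟨ω₀⟩ : Nonempty (ℕ → Y) := Measure.nonempty_of_neZero P
  have hsupp : ∀ i ∈ Finset.Icc 1 s', ∀ j ∈ Finset.Icc 1 (r' i), ∀ k ∈ Finset.Icc 1 (r' i),
      LS (fun p => g' i j p.1) =ᵐ[m.prod P] (fun p => g' i k p.1) →
      ∀ᵐ y ∂η, m ({x | 0 < g' i j x} \ T y ⁻¹' {x | 0 < g' i k x}) = 0 := by
    intro i hi j hj k hk hL
    obtain ⟨hjm, hji, hj₀, -⟩ := hdens i hi j hj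
    obtain ⟨hkm, -, hk₀, -⟩ := hdens i hi k hk
    rw [← Measure.map_eval_zero_eq_of_cylinder hP]
    exact ae_measure_diff_preimage_eq_zero_of_skewProduct hTmeas
      (measurableSet_lt measurable_const (hjm.comp (measurable_prodMk_right (y := ω₀))))
      (measurableSet_lt measurable_const (hkm.comp (measurable_prodMk_right (y := ω₀))))
      (hLS.measure_pos_diff_preimage_pos_eq_zero hji hj₀ hkm hk₀ hL)
  have hae : ∀ᵐ y ∂η, ∀ i ∈ Finset.Icc 1 s',
      (∀ j ∈ Finset.Icc 1 (r' i - 1),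
        m ({x | 0 < g' i j x} \ T y ⁻¹' {x | 0 < g' i (j + 1) x}) = 0) ∧
        m ({x | 0 < g' i (r' i) x} \ T y ⁻¹' {x | 0 < g' i 1 x}) = 0 := by
    refine (eventually_all_finset _).2 fun i hi => Eventually.and
      ((eventually_all_finset _).2 fun j hj => hsupp i hi j ?_ (j + 1) ?_ ((hcycle i hi).1 j hj))
      (hsupp i hi (r' i) ?_ 1 ?_ (hcycle i hi).2) <;>
    · have := hr i hi
      simp only [Finset.mem_Icc] at *
      omega
  obtain ⟨Y₀, hY₀, hY₀m, hY₀Q⟩ := hae.exists_measurable_mem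
  exact ⟨Y₀, hY₀m, (mem_ae_iff_prob_eq_one hY₀m).1 hY₀, hY₀Q⟩

/-- **Proposition 3.1.** In the skew product setting, suppose `𝓛_S` is
asymptotically periodic with periodic probability densities `ĝ_{i,j}`
depending only on the `x`-variable.  Then there is a measurable `Y₀ ⊆ Y` with
`η(Y₀) = 1` such that for every `y ∈ Y₀` and every `i`, the supports
`{ĝ_{i,j} > 0}` are cycled by `T_y`:
`m({ĝ_{i,j} > 0} \ T_y⁻¹{ĝ_{i,j+1} > 0}) = 0` for `1 ≤ j ≤ r̂ i − 1`, and
`m({ĝ_{i,r̂ i} > 0} \ T_y⁻¹{ĝ_{i,1} > 0}) = 0`. -/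
theorem stmt_3 {X Y : Type*} [MeasurableSpace X] [MeasurableSpace Y]
    (m : Measure X) [IsProbabilityMeasure m]
    (η : Measure Y) [IsProbabilityMeasure η]
    (P : Measure (ℕ → Y)) [IsProbabilityMeasure P]
    (hP : ∀ (n : ℕ) (A : ℕ → Set Y), (∀ i, MeasurableSet (A i)) →
      P {ω : ℕ → Y | ∀ i < n, ω i ∈ A i} = ∏ i ∈ Finset.range n, η (A i))
    (T : Y → X → X) (hTmeas : Measurable fun p : X × Y => T p.2 p.1)
    (hTns : ∀ y : Y, ∀ A : Set X, MeasurableSet A → m A = 0 → m (T y ⁻¹' A) = 0)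
    (LS : (X × (ℕ → Y) → ℝ) → X × (ℕ → Y) → ℝ)
    (hLS : IsPF (m.prod P)
      (fun p : X × (ℕ → Y) => (T (p.2 0) p.1, fun n => p.2 (n + 1))) LS)
    (s' : ℕ) (r' : ℕ → ℕ) (g' : ℕ → ℕ → X → ℝ)
    (Λ : ℕ → ℕ → ((X × (ℕ → Y)) →₁[m.prod P] ℝ) →L[ℝ] ℝ)
    (hap : AsympPeriodic (m.prod P) LS s' r' (fun i j p => g' i j p.1) Λ) :
    ∃ Y₀ : Set Y, MeasurableSet Y₀ ∧ η Y₀ = 1 ∧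
      ∀ y ∈ Y₀, ∀ i ∈ Finset.Icc 1 s',
        (∀ j ∈ Finset.Icc 1 (r' i - 1),
          m ({x | 0 < g' i j x} \ T y ⁻¹' {x | 0 < g' i (j + 1) x}) = 0) ∧
          m ({x | 0 < g' i (r' i) x} \ T y ⁻¹' {x | 0 < g' i 1 x}) = 0 :=
  stmt_3_general m η P hP T hTmeas LS hLS s' r' g' Λ hap
end
end
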